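/- Corollary 2 (two extreme points, value): Let N ≥ 2, let q : Fin N → ℝ be priors with q antitone, and let v : Fin N → EuclideanSpace ℝ (Fin 3) with ‖v i‖ ≤ 1. Suppose there are indices a, b with q a • v a ≠ q b • v b such that for every i, the point q i • v i lies on the segment joining q a • v a and q b • v b (the polytope P{q i • v i} has exactly two extreme points). Then the greatest element of the set of success probabilities {P(M) : M an N-outcome POVM} equals max over pairs i ≠ j of (1/2) * (q i + q j + max (‖q i • v i − q j • v j‖) (|q i − q j|)). -/

import Mathlib

/-!
Any `Y` with `Y - q i • ρ (v i) ⪰ 0` for all `i` bounds every success probability by `tr Y`.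
Taking `Y = ½ (g + z ⬝ σ)`, this condition reads `‖z - q i • v i‖ ≤ g - q i`. Let `g` be the
largest pairwise Helstrom value; then these balls meet pairwise, and since their centres lie on
a line, Helly's theorem in dimension one gives a common point `z`, so every POVM succeeds with
probability at most `g`. Conversely `g` is attained by the Helstrom measurement of the best pair
(or by always guessing the likelier of the two).
-/

open Matrix Complex Finset RealInnerProductSpace
open scoped ComplexOrder

/-- The first Pauli matrix. -/
noncomputable def pauli1 : Matrix (Fin 2) (Fin 2) ℂ := !![0, 1; 1, 0]

/-- The second Pauli matrix. -/
noncomputable def pauli2 : Matrix (Fin 2) (Fin 2) ℂ := !![0, -Complex.I; Complex.I, 0]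

/-- The third Pauli matrix. -/
noncomputable def pauli3 : Matrix (Fin 2) (Fin 2) ℂ := !![1, 0; 0, -1]

/-- The operator `v ⬝ σ` for a Bloch vector `v`. -/
noncomputable def blochOp (v : EuclideanSpace ℝ (Fin 3)) : Matrix (Fin 2) (Fin 2) ℂ :=
  (v 0 : ℂ) • pauli1 + (v 1 : ℂ) • pauli2 + (v 2 : ℂ) • pauli3

/-- The qubit state with Bloch vector `v`. -/
noncomputable def qubitState (v : EuclideanSpace ℝ (Fin 3)) : Matrix (Fin 2) (Fin 2) ℂ :=
  (1 / 2 : ℂ) • (1 + blochOp v)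

/-- An `N`-outcome POVM on `ℂ^d`. -/
def IsPOVM {N d : ℕ} (M : Fin N → Matrix (Fin d) (Fin d) ℂ) : Prop :=
  (∀ i, (M i).PosSemidef) ∧ ∑ i, M i = 1

/-- Priors: a probability distribution. -/
def IsPriors {N : ℕ} (q : Fin N → ℝ) : Prop :=
  (∀ i, 0 ≤ q i) ∧ ∑ i, q i = 1

/-- Success probability of the POVM `M` for qubit states with Bloch vectors `v`
and priors `q`. -/
noncomputable def succProb {N : ℕ} (q : Fin N → ℝ) (v : Fin N → EuclideanSpace ℝ (Fin 3))
    (M : Fin N → Matrix (Fin 2) (Fin 2) ℂ) : ℝ :=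
  ∑ i, q i * (Matrix.trace (qubitState (v i) * M i)).re

/-- The geometric KKT conditions for `(q, v)` satisfied by `(r, w)`. -/
def GeomKKT {N : ℕ} (q : Fin N → ℝ) (v : Fin N → EuclideanSpace ℝ (Fin 3))
    (r : Fin N → ℝ) (w : Fin N → EuclideanSpace ℝ (Fin 3)) : Prop :=
  (∀ i j, r i • w i - r j • w j = q j • v j - q i • v i) ∧
  (∃ p : Fin N → ℝ, (∀ i, 0 < p i) ∧ (∑ i, p i = 1) ∧ (∑ i, p i • w i = 0)) ∧
  (∀ i, ‖w i‖ = 1) ∧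
  (∀ i j, r i - r j = q j - q i)

lemma blochOp_eq (w : EuclideanSpace ℝ (Fin 3)) :
    blochOp w = !![(w 2 : ℂ), w 0 - w 1 * I; w 0 + w 1 * I, -w 2] := by
  ext i j
  fin_cases i <;> fin_cases j <;> simp [blochOp, pauli1, pauli2, pauli3]; ring

lemma blochOp_isHermitian (w : EuclideanSpace ℝ (Fin 3)) : (blochOp w).IsHermitian := by
  ext i j
  fin_cases i <;> fin_cases j <;> simp [blochOp_eq, Complex.ext_iff]

lemma blochOp_mul_self (w : EuclideanSpace ℝ (Fin 3)) :
    blochOp w * blochOp w = ((‖w‖ ^ 2 : ℝ) : ℂ) • 1 := by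
  rw [EuclideanSpace.norm_sq_eq, Fin.sum_univ_three, blochOp_eq, mul_fin_two, one_fin_two]
  ext i j
  fin_cases i <;> fin_cases j <;> simp <;> ring_nf <;> simp [I_sq]

lemma trace_blochOp (w : EuclideanSpace ℝ (Fin 3)) : trace (blochOp w) = 0 := by
  simp [blochOp_eq, trace_fin_two]

lemma trace_blochOp_mul_blochOp (w w' : EuclideanSpace ℝ (Fin 3)) :
    trace (blochOp w * blochOp w') = 2 * (⟪w, w'⟫ : ℝ) := by
  simp [blochOp_eq, trace_fin_two, PiLp.inner_apply, Fin.sum_univ_three]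
  ring_nf
  rw [I_sq]
  ring

lemma blochOp_add (w w' : EuclideanSpace ℝ (Fin 3)) :
    blochOp (w + w') = blochOp w + blochOp w' := by
  simp only [blochOp, PiLp.add_apply, ofReal_add, add_smul]
  abel

lemma blochOp_smul (r : ℝ) (w : EuclideanSpace ℝ (Fin 3)) :
    blochOp (r • w) = (r : ℂ) • blochOp w := by
  simp only [blochOp, PiLp.smul_apply, smul_eq_mul, ofReal_mul, smul_add, mul_smul]

lemma blochOp_neg (w : EuclideanSpace ℝ (Fin 3)) : blochOp (-w) = -blochOp w := by
  simpa using blochOp_smul (-1) w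

lemma blochOp_sub (w w' : EuclideanSpace ℝ (Fin 3)) :
    blochOp (w - w') = blochOp w - blochOp w' := by
  rw [sub_eq_add_neg, blochOp_add, blochOp_neg, sub_eq_add_neg]

lemma posSemidef_smul_one_add_blochOp {α : ℝ} {w : EuclideanSpace ℝ (Fin 3)} (h : ‖w‖ ≤ α) :
    ((α : ℂ) • 1 + blochOp w).PosSemidef := by
  rcases ((norm_nonneg w).trans h).eq_or_lt with rfl | hα
  · simp [norm_le_zero_iff.mp h, blochOp, PosSemidef.zero]
  set A := (α : ℂ) • 1 + blochOp w
  have hA : Aᴴ = A := by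
    simp [A, conjTranspose_add, conjTranspose_smul, (blochOp_isHermitian w).eq]
  -- `A² = α² + 2α B + B²` with `B² = ‖w‖²`
  have key : ((2 * α : ℝ) : ℂ) • A = Aᴴ * A + ((α ^ 2 - ‖w‖ ^ 2 : ℝ) : ℂ) • 1 := by
    simp only [hA, A, add_mul, mul_add, smul_mul_assoc, one_mul, mul_smul_comm, mul_one,
      blochOp_mul_self]
    push_cast
    module
  have hA' : A = (((2 * α)⁻¹ : ℝ) : ℂ) • (Aᴴ * A + ((α ^ 2 - ‖w‖ ^ 2 : ℝ) : ℂ) • 1) := by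
    rw [← key, smul_smul, ← ofReal_mul, inv_mul_cancel₀ (by positivity), ofReal_one, one_smul]
  rw [hA']
  refine PosSemidef.smul ?_ (zero_le_real.mpr (by positivity))
  refine (posSemidef_conjTranspose_mul_self A).add (PosSemidef.one.smul ?_)
  have := pow_le_pow_left₀ (norm_nonneg w) h 2
  exact zero_le_real.mpr (sub_nonneg.mpr this)

lemma trace_qubitState (v : EuclideanSpace ℝ (Fin 3)) : trace (qubitState v) = 1 := by
  simp [qubitState, trace_add, trace_blochOp]

lemma trace_qubitState_mul_qubitState (v u : EuclideanSpace ℝ (Fin 3)) :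
    trace (qubitState v * qubitState u) = ((1 + ⟪v, u⟫) / 2 : ℝ) := by
  simp only [qubitState, smul_mul_smul, add_mul, mul_add, one_mul, mul_one, trace_smul,
    trace_add, trace_one, Fintype.card_fin, trace_blochOp, trace_blochOp_mul_blochOp]
  push_cast
  ring

lemma qubitState_add_qubitState_neg (u : EuclideanSpace ℝ (Fin 3)) :
    qubitState u + qubitState (-u) = 1 := by
  rw [qubitState, qubitState, blochOp_neg, ← smul_add]
  module

lemma posSemidef_qubitState {u : EuclideanSpace ℝ (Fin 3)} (hu : ‖u‖ ≤ 1) :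
    (qubitState u).PosSemidef := by
  refine PosSemidef.smul ?_ (by norm_num [Complex.nonneg_iff])
  simpa using posSemidef_smul_one_add_blochOp hu

lemma smul_qubitState (q : ℝ) (v : EuclideanSpace ℝ (Fin 3)) :
    (q : ℂ) • qubitState v = (1 / 2 : ℂ) • ((q : ℂ) • 1 + blochOp (q • v)) := by
  rw [qubitState, blochOp_smul, smul_comm, smul_add]

lemma Matrix.PosSemidef.re_trace_mul_nonneg {n : Type*} [Fintype n] [DecidableEq n]
    {A B : Matrix n n ℂ} (hA : A.PosSemidef) (hB : B.PosSemidef) : 0 ≤ (trace (A * B)).re := by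
  obtain ⟨C, rfl⟩ : ∃ C : Matrix n n ℂ, B = Cᴴ * C := by
    open scoped MatrixOrder in
    exact CStarAlgebra.nonneg_iff_eq_star_mul_self.mp hB.nonneg
  rw [← Matrix.mul_assoc, trace_mul_cycle]
  exact (nonneg_iff.mp (hA.mul_mul_conjTranspose_same C).trace_nonneg).1

/-- Weak duality for minimum-error state discrimination. -/
lemma sum_re_trace_mul_le_of_posSemidef_sub {N d : ℕ} {A M : Fin N → Matrix (Fin d) (Fin d) ℂ}
    {Y : Matrix (Fin d) (Fin d) ℂ} (hY : ∀ i, (Y - A i).PosSemidef) (hM : IsPOVM M) :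
    ∑ i, (trace (A i * M i)).re ≤ (trace Y).re :=
  calc ∑ i, (trace (A i * M i)).re ≤ ∑ i, (trace (Y * M i)).re := by
        refine Finset.sum_le_sum fun i _ => ?_
        have := (hY i).re_trace_mul_nonneg (hM.1 i)
        rwa [sub_mul, trace_sub, sub_re, sub_nonneg] at this
    _ = (trace Y).re := by rw [← re_sum, ← trace_sum, ← Finset.mul_sum, hM.2, mul_one]

lemma isPOVM_single_add_single {N d : ℕ} {i j : Fin N} (hij : i ≠ j)
    {E F : Matrix (Fin d) (Fin d) ℂ}
    (hE : E.PosSemidef) (hF : F.PosSemidef) (hEF : E + F = 1) :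
    IsPOVM (Pi.single i E + Pi.single j F) := by
  refine ⟨fun k => ?_, by simp [Finset.sum_add_distrib, hEF]⟩
  rw [Pi.add_apply, Pi.single_apply, Pi.single_apply]
  split_ifs with hi hj
  · exact absurd (hi.symm.trans hj) hij
  · simpa using hE
  · simpa using hF
  · simpa using PosSemidef.zero

section SuccProb

variable {N : ℕ} (q : Fin N → ℝ) (v : Fin N → EuclideanSpace ℝ (Fin 3))

lemma succProb_eq_sum_re_trace (M : Fin N → Matrix (Fin 2) (Fin 2) ℂ) :
    succProb q v M = ∑ i, (trace (((q i : ℂ) • qubitState (v i)) * M i)).re := by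
  simp [succProb, trace_smul]

lemma succProb_add (M M' : Fin N → Matrix (Fin 2) (Fin 2) ℂ) :
    succProb q v (M + M') = succProb q v M + succProb q v M' := by
  simp only [succProb, Pi.add_apply, mul_add, trace_add, add_re,
    Finset.sum_add_distrib]

lemma succProb_single (k : Fin N) (E : Matrix (Fin 2) (Fin 2) ℂ) :
    succProb q v (Pi.single k E) = q k * (trace (qubitState (v k) * E)).re := by
  rw [succProb, Finset.sum_eq_single k (fun i _ hik => by simp [Pi.single_eq_of_ne hik])
    (by simp), Pi.single_eq_same]

lemma succProb_le_of_forall_norm_sub_le {g : ℝ} {z : EuclideanSpace ℝ (Fin 3)}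
    (hz : ∀ i, ‖z - q i • v i‖ ≤ g - q i) {M : Fin N → Matrix (Fin 2) (Fin 2) ℂ}
    (hM : IsPOVM M) : succProb q v M ≤ g := by
  set Y : Matrix (Fin 2) (Fin 2) ℂ := (1 / 2 : ℂ) • ((g : ℂ) • 1 + blochOp z)
  have hY : ∀ i, (Y - (q i : ℂ) • qubitState (v i)).PosSemidef := by
    intro i
    have hsub : Y - (q i : ℂ) • qubitState (v i)
        = (1 / 2 : ℂ) • (((g - q i : ℝ) : ℂ) • 1 + blochOp (z - q i • v i)) := by
      rw [smul_qubitState, blochOp_sub, ofReal_sub]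
      module
    rw [hsub]
    exact (posSemidef_smul_one_add_blochOp (hz i)).smul (by norm_num [Complex.nonneg_iff])
  have htrace : trace Y = g := by
    rw [trace_smul, trace_add, trace_smul, trace_one, trace_blochOp, Fintype.card_fin]
    simp only [smul_eq_mul, Nat.cast_ofNat]
    ring
  rw [succProb_eq_sum_re_trace, ← ofReal_re g, ← htrace]
  exact sum_re_trace_mul_le_of_posSemidef_sub hY hM

lemma exists_isPOVM_succProb_eq_self (k : Fin N) :
    ∃ M, IsPOVM M ∧ succProb q v M = q k := by
  refine ⟨Pi.single k 1, ⟨fun i => ?_, by simp⟩, by simp [succProb_single, trace_qubitState]⟩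
  rw [Pi.single_apply]
  split_ifs
  exacts [PosSemidef.one, PosSemidef.zero]

/-- The Helstrom measurement: project onto the direction of `q i • v i - q j • v j`. -/
lemma exists_isPOVM_succProb_eq_helstrom {i j : Fin N} (hij : i ≠ j) :
    ∃ M, IsPOVM M ∧ succProb q v M = (1 / 2) * (q i + q j + ‖q i • v i - q j • v j‖) := by
  set Δ := q i • v i - q j • v j
  set u := ‖Δ‖⁻¹ • Δ
  have hu : ‖u‖ ≤ 1 := by
    rw [norm_smul, norm_inv, norm_norm]
    exact inv_mul_le_one_of_le₀ le_rfl (norm_nonneg Δ)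
  have hΔu : ⟪Δ, u⟫ = ‖Δ‖ := by
    rw [real_inner_smul_right, real_inner_self_eq_norm_sq]
    rcases eq_or_ne ‖Δ‖ 0 with h | h
    · simp [h]
    · field_simp
  refine ⟨Pi.single i (qubitState u) + Pi.single j (qubitState (-u)),
    isPOVM_single_add_single hij (posSemidef_qubitState hu)
      (posSemidef_qubitState (by rwa [norm_neg])) (qubitState_add_qubitState_neg u), ?_⟩
  rw [succProb_add, succProb_single, succProb_single, trace_qubitState_mul_qubitState,
    trace_qubitState_mul_qubitState, ofReal_re, ofReal_re, ← hΔu]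
  simp only [Δ, inner_sub_left, real_inner_smul_left, inner_neg_right]
  ring

end SuccProb

noncomputable def helstromValue {N : ℕ} (q : Fin N → ℝ) (v : Fin N → EuclideanSpace ℝ (Fin 3))
    (i j : Fin N) : ℝ :=
  (1 / 2) * (q i + q j + max ‖q i • v i - q j • v j‖ |q i - q j|)

section HelstromValue

variable {N : ℕ} (q : Fin N → ℝ) (v : Fin N → EuclideanSpace ℝ (Fin 3))

lemma exists_isPOVM_succProb_eq_helstromValue {i j : Fin N} (hij : i ≠ j) :
    ∃ M, IsPOVM M ∧ succProb q v M = helstromValue q v i j := by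
  rcases max_choice ‖q i • v i - q j • v j‖ |q i - q j| with h | h
  · rw [helstromValue, h]
    exact exists_isPOVM_succProb_eq_helstrom q v hij
  · have hmax : helstromValue q v i j = max (q i) (q j) := by
      rw [helstromValue, h, abs_sub_comm, one_div, ← smul_eq_mul,
        ← sup_eq_half_smul_add_add_abs_sub' ℝ]
    rcases max_choice (q i) (q j) with h' | h' <;> rw [hmax, h']
    exacts [exists_isPOVM_succProb_eq_self q v i, exists_isPOVM_succProb_eq_self q v j]

lemma le_helstromValue (i j : Fin N) : q i ≤ helstromValue q v i j := by
  have := le_abs_self (q i - q j)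
  have := le_max_right ‖q i • v i - q j • v j‖ |q i - q j|
  rw [helstromValue]
  linarith

lemma norm_sub_le_helstromValue (i j : Fin N) :
    ‖q i • v i - q j • v j‖ ≤ (helstromValue q v i j - q i) + (helstromValue q v i j - q j) := by
  have := le_max_left ‖q i • v i - q j • v j‖ |q i - q j|
  rw [helstromValue]
  linarith

end HelstromValue

/-- One-dimensional Helly theorem for intervals `[t i - r i, t i + r i]`. -/
lemma Real.exists_forall_abs_sub_le {ι : Type*} [Fintype ι] [Nonempty ι] (t r : ι → ℝ)
    (h : ∀ i j, t i - t j ≤ r i + r j) : ∃ s, ∀ i, |s - t i| ≤ r i := by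
  obtain ⟨k, -, hk⟩ := Finset.univ.exists_max_image (fun i => t i - r i) Finset.univ_nonempty
  refine ⟨t k - r k, fun i => abs_le.mpr ⟨?_, ?_⟩⟩
  · linarith [hk i (Finset.mem_univ i)]
  · linarith [h k i]

lemma exists_forall_norm_sub_le_of_collinear {E : Type*} [NormedAddCommGroup E]
    [NormedSpace ℝ E] {ι : Type*} [Fintype ι] [Nonempty ι] {x : ι → E} (c d : E)
    (hx : ∀ i, ∃ τ : ℝ, x i = c + τ • d) (r : ι → ℝ) (h : ∀ i j, ‖x i - x j‖ ≤ r i + r j) :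
    ∃ z, ∀ i, ‖z - x i‖ ≤ r i := by
  choose τ hτ using hx
  have hdist (a b : ℝ) : ‖(c + a • d) - (c + b • d)‖ = |a - b| * ‖d‖ := by
    rw [add_sub_add_left_eq_sub, ← sub_smul, norm_smul, Real.norm_eq_abs]
  simp only [hτ] at h ⊢
  rcases eq_or_ne d 0 with rfl | hd
  · refine ⟨c, fun i => ?_⟩
    simpa using h i i
  have hd' : 0 < ‖d‖ := norm_pos_iff.mpr hd
  obtain ⟨s, hs⟩ := Real.exists_forall_abs_sub_le τ (fun i => r i / ‖d‖) fun i j => by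
    rw [← add_div, le_div_iff₀ hd']
    exact (mul_le_mul_of_nonneg_right (le_abs_self _) hd'.le).trans
      ((hdist _ _).symm.le.trans (h i j))
  refine ⟨c + s • d, fun i => ?_⟩
  rw [hdist, ← le_div_iff₀ hd']
  exact hs i

theorem corollary_two_extreme_points_general (N : ℕ) (hN : 2 ≤ N)
    (q : Fin N → ℝ)
    (v : Fin N → EuclideanSpace ℝ (Fin 3))
    (a b : Fin N)
    (hseg : ∀ i, q i • v i ∈ segment ℝ (q a • v a) (q b • v b)) :
    ∃ g : ℝ,
      IsGreatest {x | ∃ M : Fin N → Matrix (Fin 2) (Fin 2) ℂ, IsPOVM M ∧ succProb q v M = x} g ∧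
      IsGreatest {x | ∃ i j : Fin N, i ≠ j ∧
        x = (1 / 2) * (q i + q j + max ‖q i • v i - q j • v j‖ |q i - q j|)} g := by
  have : Nontrivial (Fin N) := Fin.nontrivial_iff_two_le.mpr hN
  obtain ⟨i₁, j₁, hij₁⟩ := exists_pair_ne (Fin N)
  obtain ⟨⟨i₀, j₀⟩, hij₀, hmax⟩ := Finset.univ.offDiag.exists_max_image
    (fun p => helstromValue q v p.1 p.2) ⟨(i₁, j₁), by simpa using hij₁⟩
  rw [Finset.mem_offDiag] at hij₀
  set g := helstromValue q v i₀ j₀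
  have hle {i j} (hij : i ≠ j) : helstromValue q v i j ≤ g := hmax (i, j) (by simpa using hij)
  have hcollinear (i) : ∃ τ : ℝ, q i • v i = q a • v a + τ • (q b • v b - q a • v a) := by
    have := hseg i
    rw [segment_eq_image'] at this
    obtain ⟨τ, -, hτ⟩ := this
    exact ⟨τ, hτ.symm⟩
  obtain ⟨z, hz⟩ := exists_forall_norm_sub_le_of_collinear _ _ hcollinear (fun i => g - q i)
    fun i j => by
      rcases eq_or_ne i j with rfl | hij
      · obtain ⟨j, hij⟩ := exists_ne i
        simpa using (le_helstromValue q v i j).trans (hle hij.symm)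
      · linarith [norm_sub_le_helstromValue q v i j, hle hij]
  refine ⟨g, ⟨exists_isPOVM_succProb_eq_helstromValue q v hij₀.2.2,
    ?_⟩, ⟨i₀, j₀, hij₀.2.2, rfl⟩, ?_⟩
  · rintro _ ⟨M, hM, rfl⟩
    exact succProb_le_of_forall_norm_sub_le q v hz hM
  · rintro _ ⟨i, j, hij, rfl⟩
    exact hle hij

/-- Corollary 2 (two extreme points, value): if the polytope `P{q i • v i}` is a
segment with extreme points indexed by `a, b`, the guessing probability equals the
maximum over pairs `i ≠ j` of `(1/2)(q i + q j + ‖q i ρ i - q j ρ j‖₁)`. -/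
theorem corollary_two_extreme_points (N : ℕ) (hN : 2 ≤ N)
    (q : Fin N → ℝ) (hq : IsPriors q) (hqa : Antitone q)
    (v : Fin N → EuclideanSpace ℝ (Fin 3)) (hv : ∀ i, ‖v i‖ ≤ 1)
    (a b : Fin N) (hab : q a • v a ≠ q b • v b)
    (hseg : ∀ i, q i • v i ∈ segment ℝ (q a • v a) (q b • v b)) :
    ∃ g : ℝ,
      IsGreatest {x | ∃ M : Fin N → Matrix (Fin 2) (Fin 2) ℂ, IsPOVM M ∧ succProb q v M = x} g ∧
      IsGreatest {x | ∃ i j : Fin N, i ≠ j ∧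
        x = (1 / 2) * (q i + q j + max ‖q i • v i - q j • v j‖ |q i - q j|)} g :=
  corollary_two_extreme_points_general N hN q v a b hseg
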